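/- Fix an integer m ≥ 2 and p ∈ (0,1). Let S = Fin m, Q = Bool × Fin m, let P(y|x,s) be the Ising channel law (P = 1 if x = s = y; P = 1/2 if x ≠ s and y ∈ {x,s}; P = 0 otherwise), and let φ((q_d,q_s), y) = (0,y) if q_d = 1 and y = q_s, and (1,y) otherwise. Let u : S × Q → (probability vectors on S) be any input distribution satisfying: u(x|s,(1,s)) = p if x = s and (1-p)/(m-1) if x ≠ s; u(x|s,(0,q_s)) = 1 if x = s and 0 otherwise (u(·|s,(1,q_s)) is arbitrary when q_s ≠ s). Define π on S × Q by π(s,(1,q_s)) = 2/(m(p+3)) if q_s = s and 0 otherwise, π(s,(0,q_s)) = 2p/(m(p+3)) if q_s = s and (1-p)/(m(m-1)(p+3)) otherwise. Then π is a probability distribution (its entries are nonnegative and sum to 1) and π is stationary for the Markov kernel K((s,q),(s',q')) = Σ_{x,y} u(x|s,q)·P(y|x,s)·1[s' = x]·1[q' = φ(q,y)], i.e., Σ_{(s,q)} π(s,q)·K((s,q),(s',q')) = π(s',q') for every (s',q'). -/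
import Mathlib


/-- The Ising channel law `P(y|x,s)`. -/
noncomputable def IsingP {m : ℕ} (y x s : Fin m) : ℝ :=
  if x = s then (if y = s then 1 else 0)
  else if y = x ∨ y = s then 1 / 2 else 0

/-- The Q-graph transition `φ`. -/
def qGraph {m : ℕ} (q : Bool × Fin m) (y : Fin m) : Bool × Fin m :=
  if q.1 = true ∧ y = q.2 then (false, y) else (true, y)

/-- stationary distribution, Lemma 2 of the paper: for any input
distribution `u(x|s,q)` satisfying `u(x|s,(1,s)) = p` if `x = s` and `(1-p)/(m-1)`
otherwise, and `u(x|s,(0,q_s)) = 1[x = s]` (arbitrary at nodes `(1,q_s)` with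
`q_s ≠ s`), the distribution `π` defined by `π(s,(1,q_s)) = 2/(m(p+3))·1[q_s = s]`,
`π(s,(0,q_s)) = 2p/(m(p+3))` if `q_s = s` and `(1-p)/(m(m-1)(p+3))` otherwise, is a
probability distribution and is stationary for the Markov kernel
`K((s,q),(s',q')) = Σ_{x,y} u(x|s,q)P(y|x,s)1[s'=x]1[q'=φ(q,y)]`. -/
theorem ising_stationary_distribution (m : ℕ) (hm : 2 ≤ m) (p : ℝ)
    (hp : p ∈ Set.Ioo (0 : ℝ) 1)
    (u : Fin m → Fin m → Bool × Fin m → ℝ)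
    (hu_nonneg : ∀ x s q, 0 ≤ u x s q)
    (hu_sum : ∀ s q, ∑ x : Fin m, u x s q = 1)
    (hu_known : ∀ s x : Fin m,
      u x s (true, s) = if x = s then p else (1 - p) / ((m : ℝ) - 1))
    (hu_unknown : ∀ (s qs x : Fin m),
      u x s (false, qs) = if x = s then 1 else 0) :
    let π : Fin m × (Bool × Fin m) → ℝ := fun sq =>
      if sq.2.1 then (if sq.2.2 = sq.1 then 2 / (m * (p + 3)) else 0)
      else (if sq.2.2 = sq.1 then 2 * p / (m * (p + 3))
            else (1 - p) / (m * ((m : ℝ) - 1) * (p + 3)))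
    let K : Fin m × (Bool × Fin m) → Fin m × (Bool × Fin m) → ℝ := fun sq sq' =>
      ∑ x : Fin m, ∑ y : Fin m, u x sq.1 sq.2 * IsingP y x sq.1 *
        (if sq'.1 = x then 1 else 0) * (if sq'.2 = qGraph sq.2 y then 1 else 0)
    (∀ sq, 0 ≤ π sq) ∧ (∑ sq, π sq = 1) ∧
      (∀ sq', ∑ sq, π sq * K sq sq' = π sq') := by
  obtain ⟨hp0, hp1⟩ := hp
  have hm2 : (2:ℝ) ≤ (m:ℝ) := by exact_mod_cast hm
  have hm0 : (0:ℝ) < (m:ℝ) := by linarith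
  have hm1 : (0:ℝ) < (m:ℝ) - 1 := by linarith
  have hp3 : (0:ℝ) < p + 3 := by linarith
  have h1p : (0:ℝ) < 1 - p := by linarith
  intro π K
  have hconst : ∀ (A B : ℝ) (s : Fin m),
      ∑ qs : Fin m, (if qs = s then A else B) = A + ((m:ℝ)-1) * B := by
    intro A B s
    rw [← Finset.add_sum_erase Finset.univ _ (Finset.mem_univ s)]
    have h2 : ∑ qs ∈ Finset.univ.erase s, (if qs = s then A else B)
        = ∑ _qs ∈ Finset.univ.erase s, B :=
      Finset.sum_congr rfl fun x hx => if_neg (Finset.ne_of_mem_erase hx)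
    rw [if_pos rfl, h2, Finset.sum_const, Finset.card_erase_of_mem (Finset.mem_univ s),
      Finset.card_univ, Fintype.card_fin, nsmul_eq_mul, Nat.cast_sub (by omega), Nat.cast_one]
  refine ⟨?_, ?_, ?_⟩
  · rintro ⟨s, b, qs⟩
    simp only [π]
    split_ifs <;> positivity
  · rw [Fintype.sum_prod_type]
    simp only [π]
    have : ∀ s : Fin m, (∑ q : Bool × Fin m,
        if q.1 then (if q.2 = s then 2 / (m * (p + 3)) else 0)
        else (if q.2 = s then 2 * p / (m * (p + 3))
              else (1 - p) / (m * ((m : ℝ) - 1) * (p + 3))))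
        = (p+3) / ((m:ℝ)*(p+3)) := by
      intro s
      rw [Fintype.sum_prod_type, Fintype.sum_bool]
      simp only [Bool.false_eq_true, reduceIte]
      rw [hconst, hconst]
      field_simp
      ring
    simp only [this, Finset.sum_const, Finset.card_univ, Fintype.card_fin, nsmul_eq_mul]
    field_simp
  · rintro ⟨s', b', y'⟩
    -- Step 1: evaluate the kernel
    have hK : ∀ (s : Fin m) (q : Bool × Fin m),
        K (s, q) (s', (b', y')) = u s' s q * IsingP y' s' s *
          (if ((b', y') : Bool × Fin m) = qGraph q y' then 1 else 0) := by
      intro s q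
      have hy2 : ∀ y : Fin m, (qGraph q y).2 = y := by
        intro y; unfold qGraph; split <;> rfl
      have step : ∀ x y : Fin m, u x s q * IsingP y x s * (if s' = x then (1:ℝ) else 0) *
          (if ((b', y') : Bool × Fin m) = qGraph q y then 1 else 0)
          = if s' = x then (if y = y' then u x s q * IsingP y' x s *
              (if ((b', y') : Bool × Fin m) = qGraph q y' then 1 else 0) else 0) else 0 := by
        intro x y
        by_cases hx : s' = x
        · by_cases hy : y = y'
          · subst hy; subst hx; simp
          · have hne : ((b', y') : Bool × Fin m) ≠ qGraph q y := by
              intro hc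
              apply hy
              have h2 := hy2 y
              rw [← hc] at h2
              exact h2.symm
            simp [hx, hy, hne]
        · simp [hx]
      show (∑ x : Fin m, ∑ y : Fin m, _) = _
      simp only [K, step]
      rw [Finset.sum_comm]
      simp
    -- J at false nodes
    have hJf : ∀ qs : Fin m,
        (if ((b', y') : Bool × Fin m) = qGraph ((false : Bool), qs) y' then (1:ℝ) else 0)
        = (if b' = true then 1 else 0) := by
      intro qs
      simp [qGraph, Prod.ext_iff]
    -- inner sum over q
    have hinner : ∀ s : Fin m, (∑ q : Bool × Fin m, π (s, q) * K (s, q) (s', (b', y')))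
        = 2 / ((m:ℝ)*(p+3)) * (u s' s (true, s) * IsingP y' s' s *
            (if ((b', y') : Bool × Fin m) = qGraph ((true : Bool), s) y' then 1 else 0))
          + (if s' = s then 1 else 0) *
              (IsingP y' s' s * (if b' = true then 1 else 0) * ((1+p)/((m:ℝ)*(p+3)))) := by
      intro s
      rw [Fintype.sum_prod_type, Fintype.sum_bool]
      congr 1
      · -- true part
        simp only [hK, π, if_true]
        rw [show (∑ qs : Fin m, (if qs = s then 2 / ((m:ℝ) * (p + 3)) else 0) *
            (u s' s (true, qs) * IsingP y' s' s *
              (if ((b', y') : Bool × Fin m) = qGraph (true, qs) y' then 1 else 0)))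
          = ∑ qs : Fin m, (if qs = s then 2 / ((m:ℝ) * (p + 3)) *
            (u s' s (true, qs) * IsingP y' s' s *
              (if ((b', y') : Bool × Fin m) = qGraph (true, qs) y' then 1 else 0)) else 0)
          from Finset.sum_congr rfl (fun qs _ => by split <;> simp)]
        rw [Finset.sum_ite_eq' Finset.univ s, if_pos (Finset.mem_univ s)]
      · -- false part
        simp only [hK, hu_unknown, hJf, π]
        rw [show (∑ qs : Fin m, (if (false : Bool) = true then
              (if qs = s then 2 / ((m:ℝ) * (p + 3)) else 0)
              else (if qs = s then 2 * p / ((m:ℝ) * (p + 3))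
                else (1 - p) / ((m:ℝ) * ((m : ℝ) - 1) * (p + 3)))) *
            ((if s' = s then (1:ℝ) else 0) * IsingP y' s' s * (if b' = true then 1 else 0)))
          = (∑ qs : Fin m, (if qs = s then 2 * p / ((m:ℝ) * (p + 3))
                else (1 - p) / ((m:ℝ) * ((m : ℝ) - 1) * (p + 3)))) *
            ((if s' = s then (1:ℝ) else 0) * IsingP y' s' s * (if b' = true then 1 else 0))
          from by rw [Finset.sum_mul]; exact Finset.sum_congr rfl (fun qs _ => by simp)]
        rw [hconst]
        have : 2 * p / ((m:ℝ) * (p + 3)) + ((m:ℝ) - 1) * ((1 - p) / ((m:ℝ) * ((m : ℝ) - 1) * (p + 3)))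
            = (1+p)/((m:ℝ)*(p+3)) := by field_simp; ring
        rw [this]
        ring
    rw [Fintype.sum_prod_type]
    simp only [hinner]
    rw [Finset.sum_add_distrib]
    have hsnd : (∑ s : Fin m, (if s' = s then (1:ℝ) else 0) *
        (IsingP y' s' s * (if b' = true then 1 else 0) * ((1+p)/((m:ℝ)*(p+3)))))
        = IsingP y' s' s' * (if b' = true then 1 else 0) * ((1+p)/((m:ℝ)*(p+3))) := by
      rw [show (∑ s : Fin m, (if s' = s then (1:ℝ) else 0) *
          (IsingP y' s' s * (if b' = true then 1 else 0) * ((1+p)/((m:ℝ)*(p+3)))))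
        = ∑ s : Fin m, (if s' = s then
            IsingP y' s' s * (if b' = true then 1 else 0) * ((1+p)/((m:ℝ)*(p+3))) else 0)
        from Finset.sum_congr rfl (fun s _ => by split <;> simp)]
      rw [Finset.sum_ite_eq Finset.univ s', if_pos (Finset.mem_univ s')]
    rw [hsnd]
    rcases b' with _ | _
    · -- b' = false
      have hJ : ∀ s : Fin m,
          (if ((false, y') : Bool × Fin m) = qGraph ((true : Bool), s) y' then (1:ℝ) else 0)
          = if y' = s then 1 else 0 := by
        intro s
        by_cases h : y' = s <;> simp [qGraph, h, Prod.ext_iff]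
      simp only [hJ]
      rw [show (∑ s : Fin m, 2 / ((m:ℝ)*(p+3)) * (u s' s (true, s) * IsingP y' s' s *
          (if y' = s then (1:ℝ) else 0)))
        = ∑ s : Fin m, (if y' = s then
            2 / ((m:ℝ)*(p+3)) * (u s' s (true, s) * IsingP y' s' s) else 0)
        from Finset.sum_congr rfl (fun s _ => by split <;> simp)]
      rw [Finset.sum_ite_eq Finset.univ y', if_pos (Finset.mem_univ y')]
      simp only [π, hu_known]
      by_cases h : s' = y'
      · subst h
        simp [IsingP]
        ring
      · have h' : ¬ (y' = s') := fun hc => h hc.symm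
        simp only [IsingP, if_neg h, if_neg h', Bool.false_eq_true, if_false]
        simp only [or_true, if_true]
        field_simp
        ring
    · -- b' = true
      have hJ : ∀ s : Fin m,
          (if ((true, y') : Bool × Fin m) = qGraph ((true : Bool), s) y' then (1:ℝ) else 0)
          = if y' = s then 0 else 1 := by
        intro s
        by_cases h : y' = s <;> simp [qGraph, h, Prod.ext_iff]
      simp only [hJ]
      rw [← Finset.add_sum_erase Finset.univ _ (Finset.mem_univ y')]
      rw [if_pos rfl]
      by_cases hy : y' = s'
      · subst hy
        have herase : ∀ s ∈ Finset.univ.erase y', 2 / ((m:ℝ)*(p+3)) * (u y' s (true, s) *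
            IsingP y' y' s * (if y' = s then (0:ℝ) else 1))
            = 2 / ((m:ℝ)*(p+3)) * ((1 - p) / ((m : ℝ) - 1) * (1/2)) := by
          intro s hs
          have hne : s ≠ y' := Finset.ne_of_mem_erase hs
          have hne' : ¬ (y' = s) := fun hc => hne hc.symm
          rw [if_neg hne', hu_known, if_neg hne']
          have : IsingP y' y' s = 1/2 := by
            rw [IsingP, if_neg hne', if_pos (Or.inl rfl)]
          rw [this]
          ring
        rw [Finset.sum_congr rfl herase, Finset.sum_const,
          Finset.card_erase_of_mem (Finset.mem_univ y'), Finset.card_univ, Fintype.card_fin,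
          nsmul_eq_mul, Nat.cast_sub (by omega), Nat.cast_one]
        simp only [π, IsingP, if_pos rfl, if_true]
        field_simp
        ring
      · have herase : ∀ s ∈ Finset.univ.erase y', 2 / ((m:ℝ)*(p+3)) * (u s' s (true, s) *
            IsingP y' s' s * (if y' = s then (0:ℝ) else 1)) = 0 := by
          intro s hs
          have hne : s ≠ y' := Finset.ne_of_mem_erase hs
          have hne' : ¬ (y' = s) := fun hc => hne hc.symm
          have : IsingP y' s' s = 0 := by
            rw [IsingP]
            by_cases hss : s' = s
            · rw [if_pos hss, if_neg hne']
            · rw [if_neg hss, if_neg]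
              rintro (h1 | h2)
              · exact hy h1
              · exact hne' h2
          rw [this]
          ring
        rw [Finset.sum_congr rfl herase, Finset.sum_const]
        have : IsingP y' s' s' = 0 := by rw [IsingP, if_pos rfl, if_neg hy]
        rw [this]
        simp [π, hy]
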